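/- Let ᾱ, β̄ ∈ ℝ³, M̄ ∈ ℝ^{3×3}, ξ ∈ ℝ³ and c ∈ ℝ satisfy M̄ξ + cᾱ = 0, M̄ᵀξ + cβ̄ = 0, ᾱ·ξ = 0 and β̄·ξ = 0. Let h : ℝ → ℝ be differentiable and define, for (x, t) ∈ ℝ³ × ℝ, the functions α(x,t) = h(x·ξ + ct)·ᾱ, β(x,t) = h(x·ξ + ct)·β̄ and M(x,t) = h(x·ξ + ct)·M̄. Then at every point (x,t): for each i ∈ {1,2,3}, ∂ₜα_i + Σ_{j=1}^{3} ∂_{x_j} M_{ij} = 0 and ∂ₜβ_i + Σ_{j=1}^{3} ∂_{x_j} M_{ji} = 0; moreover Σ_{i=1}^{3} ∂_{x_i} α_i = 0 and Σ_{i=1}^{3} ∂_{x_i} β_i = 0. -/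

import Mathlib

open Matrix

noncomputable section

/-- Vectors in ℝ³. -/
abbrev V3 := Fin 3 → ℝ
/-- 3×3 real matrices. -/
abbrev Mat3 := Matrix (Fin 3) (Fin 3) ℝ
/-- The state space Z = ℝ³ × ℝ³ × ℝ^{3×3}. -/
abbrev Z := V3 × V3 × Mat3

/-- Euclidean dot product on ℝ³. -/
def dot3 (u v : V3) : ℝ := ∑ i, u i * v i
/-- Euclidean norm on ℝ³. -/
def norm3 (v : V3) : ℝ := Real.sqrt (dot3 v v)
/-- Outer (tensor) product u ⊗ v. -/
def outer (u v : V3) : Mat3 := Matrix.vecMulVec u v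

/-- The constraint set K_{r,s}. -/
def Krs (r s p : ℝ) : Set Z :=
  {z | z.2.2 = outer z.1 z.2.1 + p • (1 : Mat3) ∧ norm3 z.1 = r ∧ norm3 z.2.1 = s}

/-- The wave cone Λ. -/
def waveCone : Set Z :=
  {z | ∃ (ξ : V3) (c : ℝ), ξ ≠ 0 ∧ z.2.2 *ᵥ ξ + c • z.1 = 0 ∧
    z.2.2ᵀ *ᵥ ξ + c • z.2.1 = 0 ∧ dot3 z.1 ξ = 0 ∧ dot3 z.2.1 ξ = 0}

/-- M₀(z) = α⊗β − M + p·Id. -/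
def M0 (p : ℝ) (z : Z) : Mat3 := outer z.1 z.2.1 - z.2.2 + p • (1 : Mat3)

/-- G(z) = √((r² − |α|²)(s² − |β|²)). -/
def Gfun (r s : ℝ) (z : Z) : ℝ :=
  Real.sqrt ((r ^ 2 - norm3 z.1 ^ 2) * (s ^ 2 - norm3 z.2.1 ^ 2))

/-- Iterated lamination sets K_{r,s}^{Λ,i}. -/
def lamSet (r s p : ℝ) : ℕ → Set Z
  | 0 => Krs r s p
  | (i + 1) => {z | ∃ zb ∈ waveCone, ∃ t₁ t₂ : ℝ, t₁ ≤ 0 ∧ 0 ≤ t₂ ∧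
      z + t₁ • zb ∈ lamSet r s p i ∧ z + t₂ • zb ∈ lamSet r s p i}

/-- Nuclear norm: trace of the PSD square root of AᵀA. -/
def nuclearNorm (A : Mat3) : ℝ :=
  ((Matrix.posSemidef_conjTranspose_mul_self A).1.eigenvectorUnitary *
    Matrix.diagonal (Real.sqrt ∘ (Matrix.posSemidef_conjTranspose_mul_self A).1.eigenvalues) *
    (star (Matrix.posSemidef_conjTranspose_mul_self A).1.eigenvectorUnitary : Mat3)).trace

/-- f₀(A) = (A₂₃, A₃₁, A₁₂) (0-indexed: (A 1 2, A 2 0, A 0 1)). -/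
def f0 (A : Mat3) : V3 := ![A 1 2, A 2 0, A 0 1]

/-- Frobenius norm of a matrix. -/
def frobNorm (A : Mat3) : ℝ := Real.sqrt (∑ i, ∑ j, A i j ^ 2)

/-- Λ-convexity of a set. -/
def LambdaConvex (S : Set Z) : Prop :=
  ∀ z₁ ∈ S, ∀ z₂ ∈ S, z₁ - z₂ ∈ waveCone →
    ∀ t : ℝ, t ∈ Set.Icc (0 : ℝ) 1 → z₁ + t • (z₂ - z₁) ∈ S

/-- The Λ-convex hull of K_{r,s}: the intersection of all Λ-convex sets containing it. -/
def lambdaHull (r s p : ℝ) : Set Z := ⋂₀ {S : Set Z | LambdaConvex S ∧ Krs r s p ⊆ S}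


lemma dotUpdate_hasDerivAt (x ξ : V3) (j : Fin 3) :
    HasDerivAt (fun y => dot3 (Function.update x j y) ξ) (ξ j) (x j) := by
  have h : ∀ y, dot3 (Function.update x j y) ξ
      = ∑ i : Fin 3, (if i = j then y else x i) * ξ i := by
    intro y; unfold dot3; congr 1; ext i; by_cases hij : i = j <;> simp [Function.update, hij]
  have h' : HasDerivAt (fun y => ∑ i : Fin 3, (if i = j then y else x i) * ξ i)
      (∑ i : Fin 3, (if i = j then ξ j else 0)) (x j) := by
    apply HasDerivAt.fun_sum
    intro i _
    by_cases hij : i = j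
    · subst hij; simpa using (hasDerivAt_id (x i)).mul_const (ξ i)
    · simp only [if_neg hij]; exact hasDerivAt_const _ _
  have h'' := h'.congr_of_eventuallyEq (Filter.Eventually.of_forall h)
  simpa [Finset.sum_ite_eq'] using h''

lemma deriv_time (h : ℝ → ℝ) (hh : Differentiable ℝ h) (A c k t : ℝ) :
    deriv (fun τ => h (A + c * τ) * k) t = deriv h (A + c * t) * c * k := by
  have h1 : HasDerivAt (fun τ : ℝ => A + c * τ) c t := by
    simpa using ((hasDerivAt_id t).const_mul c).const_add A
  exact (((hh (A + c * t)).hasDerivAt.comp t h1).mul_const k).deriv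

lemma deriv_space (h : ℝ → ℝ) (hh : Differentiable ℝ h) (x ξ : V3) (c t : ℝ) (j : Fin 3)
    (k : ℝ) :
    deriv (fun y => h (dot3 (Function.update x j y) ξ + c * t) * k) (x j)
      = deriv h (dot3 x ξ + c * t) * ξ j * k := by
  have h1 : HasDerivAt (fun y => dot3 (Function.update x j y) ξ + c * t) (ξ j) (x j) :=
    (dotUpdate_hasDerivAt x ξ j).add_const (c * t)
  have h2 := ((hh _).hasDerivAt.comp (x j) h1).mul_const k
  rw [Function.comp_def] at h2
  simpa using h2.deriv

theorem stmt15 (a b : V3) (Mb : Mat3) (ξ : V3) (c : ℝ)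
    (h1 : Mb *ᵥ ξ + c • a = 0) (h2 : Mbᵀ *ᵥ ξ + c • b = 0)
    (h3 : dot3 a ξ = 0) (h4 : dot3 b ξ = 0)
    (h : ℝ → ℝ) (hh : Differentiable ℝ h) :
    ∀ (x : V3) (t : ℝ),
      (∀ i, deriv (fun τ => h (dot3 x ξ + c * τ) * a i) t +
          ∑ j, deriv (fun y => h (dot3 (Function.update x j y) ξ + c * t) * Mb i j)
            (x j) = 0) ∧
      (∀ i, deriv (fun τ => h (dot3 x ξ + c * τ) * b i) t +
          ∑ j, deriv (fun y => h (dot3 (Function.update x j y) ξ + c * t) * Mb j i)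
            (x j) = 0) ∧
      (∑ i, deriv (fun y => h (dot3 (Function.update x i y) ξ + c * t) * a i) (x i) = 0) ∧
      (∑ i, deriv (fun y => h (dot3 (Function.update x i y) ξ + c * t) * b i) (x i) = 0) := by
  intro x t
  set D := deriv h (dot3 x ξ + c * t) with hD
  have hmv1 : ∀ i, (∑ j, Mb i j * ξ j) + c * a i = 0 := by
    intro i
    have := congrFun h1 i
    simpa [Matrix.mulVec, dotProduct] using this
  have hmv2 : ∀ i, (∑ j, Mb j i * ξ j) + c * b i = 0 := by
    intro i
    have := congrFun h2 i
    simpa [Matrix.mulVec, dotProduct, Matrix.transpose] using this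
  refine ⟨fun i => ?_, fun i => ?_, ?_, ?_⟩
  · rw [deriv_time h hh]
    have : ∑ j, deriv (fun y => h (dot3 (Function.update x j y) ξ + c * t) * Mb i j) (x j)
        = D * ∑ j, Mb i j * ξ j := by
      rw [Finset.mul_sum]; refine Finset.sum_congr rfl fun j _ => ?_
      rw [deriv_space h hh]; ring
    rw [this, ← hD]
    linear_combination D * hmv1 i
  · rw [deriv_time h hh]
    have : ∑ j, deriv (fun y => h (dot3 (Function.update x j y) ξ + c * t) * Mb j i) (x j)
        = D * ∑ j, Mb j i * ξ j := by
      rw [Finset.mul_sum]; refine Finset.sum_congr rfl fun j _ => ?_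
      rw [deriv_space h hh]; ring
    rw [this, ← hD]
    linear_combination D * hmv2 i
  · calc ∑ i, deriv (fun y => h (dot3 (Function.update x i y) ξ + c * t) * a i) (x i)
        = ∑ i, D * ξ i * a i :=
          Finset.sum_congr rfl fun i _ => deriv_space h hh x ξ c t i (a i)
      _ = D * dot3 a ξ := by
          rw [dot3, Finset.mul_sum]; exact Finset.sum_congr rfl fun i _ => by ring
      _ = 0 := by rw [h3, mul_zero]
  · calc ∑ i, deriv (fun y => h (dot3 (Function.update x i y) ξ + c * t) * b i) (x i)
        = ∑ i, D * ξ i * b i :=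
          Finset.sum_congr rfl fun i _ => deriv_space h hh x ξ c t i (b i)
      _ = D * dot3 b ξ := by
          rw [dot3, Finset.mul_sum]; exact Finset.sum_congr rfl fun i _ => by ring
      _ = 0 := by rw [h4, mul_zero]
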